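/- Let (𝔞, r) be a quasitriangular Lie bialgebra and θ ∈ Aut(𝔞) preserving t = r + r^{21}. Then f := (θ⊗θ)(r) − r is a classical twist of (𝔞, δ_r), i.e., (δ_r ⊗ id)(f) + [f^{13}, f^{23}] + cyclic permutations = 0, where δ_r(x) = [r, x⊗1 + 1⊗x]. -/

import Mathlib

open TensorProduct

variable (k : Type) [Field k] (a : Type) [LieRing a] [LieAlgebra k a]

/-- The Lie bracket of `a` as a bilinear map. -/
noncomputable def br2 : a →ₗ[k] a →ₗ[k] a :=
  LinearMap.mk₂ k (fun x y => ⁅x, y⁆) add_lie smul_lie lie_add lie_smul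

/-- The Lie bracket as a linear map on the tensor square. -/
noncomputable def brL : a ⊗[k] a →ₗ[k] a := TensorProduct.lift (br2 k a)

/-- The adjoint action of `a` on `a ⊗ a`: `act x (u ⊗ v) = ⁅x,u⁆ ⊗ v + u ⊗ ⁅x,v⁆`,
which equals `[x ⊗ 1 + 1 ⊗ x, u ⊗ v]` in `U(a) ⊗ U(a)`. -/
noncomputable def act : a →ₗ[k] (a ⊗[k] a →ₗ[k] a ⊗[k] a) where
  toFun x := TensorProduct.map (br2 k a x) LinearMap.id + TensorProduct.map LinearMap.id (br2 k a x)
  map_add' x y := by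
    ext u v
    simp [br2, add_lie, TensorProduct.tmul_add, TensorProduct.add_tmul]
    abel
  map_smul' c x := by
    ext u v
    simp [br2, smul_lie, TensorProduct.tmul_add, TensorProduct.smul_tmul', TensorProduct.tmul_smul,
      smul_add]

/-- `adL f` is the map `x ↦ [f, x ⊗ 1 + 1 ⊗ x]`. -/
noncomputable def adL (f : a ⊗[k] a) : a →ₗ[k] a ⊗[k] a := -((act k a).flip f)

/-- Cyclic permutation `x ⊗ y ⊗ z ↦ y ⊗ z ⊗ x` on the triple tensor product. -/
noncomputable def cyc : a ⊗[k] (a ⊗[k] a) →ₗ[k] a ⊗[k] (a ⊗[k] a) :=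
  (TensorProduct.congr (LinearEquiv.refl k a) (TensorProduct.comm k a a)).toLinearMap ∘ₗ
    (TensorProduct.leftComm k a a a).toLinearMap

/-- Sum over cyclic permutations. -/
noncomputable def cycSum (w : a ⊗[k] (a ⊗[k] a)) : a ⊗[k] (a ⊗[k] a) :=
  w + cyc k a w + cyc k a (cyc k a w)

/-- `(d ⊗ id)` on the tensor square, landing in the triple tensor product. -/
noncomputable def d13 (d : a →ₗ[k] a ⊗[k] a) : a ⊗[k] a →ₗ[k] a ⊗[k] (a ⊗[k] a) :=
  (TensorProduct.assoc k a a a).toLinearMap ∘ₗ TensorProduct.map d LinearMap.id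

/-- `(f, g) ↦ [f^{13}, g^{23}]`: on pure tensors `(x ⊗ y, u ⊗ v) ↦ x ⊗ u ⊗ ⁅y,v⁆`. -/
noncomputable def C13_23 : (a ⊗[k] a) ⊗[k] (a ⊗[k] a) →ₗ[k] a ⊗[k] (a ⊗[k] a) :=
  (TensorProduct.map LinearMap.id (TensorProduct.map LinearMap.id (brL k a))) ∘ₗ
    (TensorProduct.congr (LinearEquiv.refl k a) (TensorProduct.leftComm k a a a)).toLinearMap ∘ₗ
    (TensorProduct.assoc k a a (a ⊗[k] a)).toLinearMap

/-- `(f, g) ↦ [f^{12}, g^{13}]`: on pure tensors `(x ⊗ y, u ⊗ v) ↦ ⁅x,u⁆ ⊗ y ⊗ v`. -/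
noncomputable def C12_13 : (a ⊗[k] a) ⊗[k] (a ⊗[k] a) →ₗ[k] a ⊗[k] (a ⊗[k] a) :=
  (TensorProduct.map (brL k a) LinearMap.id) ∘ₗ
    (TensorProduct.tensorTensorTensorComm k a a a a).toLinearMap

/-- `(f, g) ↦ [f^{12}, g^{23}]`: on pure tensors `(x ⊗ y, u ⊗ v) ↦ x ⊗ ⁅y,u⁆ ⊗ v`. -/
noncomputable def C12_23 : (a ⊗[k] a) ⊗[k] (a ⊗[k] a) →ₗ[k] a ⊗[k] (a ⊗[k] a) :=
  (TensorProduct.map LinearMap.id (TensorProduct.map (brL k a) LinearMap.id)) ∘ₗ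
    (TensorProduct.congr (LinearEquiv.refl k a) (TensorProduct.assoc k a a a).symm).toLinearMap ∘ₗ
    (TensorProduct.assoc k a a (a ⊗[k] a)).toLinearMap

/-- Membership in `Λ²a`: antisymmetry in `a ⊗ a`. -/
def IsAntisym (w : a ⊗[k] a) : Prop := TensorProduct.comm k a a w = -w

/-- The 1-cocycle condition for a cobracket. -/
def IsCocycle (d : a →ₗ[k] a ⊗[k] a) : Prop :=
  ∀ x y : a, d ⁅x, y⁆ = act k a x (d y) - act k a y (d x)

/-- The co-Jacobi identity. -/
def IsCoJacobi (d : a →ₗ[k] a ⊗[k] a) : Prop :=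
  ∀ x : a, cycSum k a ((d13 k a d) (d x)) = 0

/-- `(a, d)` is a Lie bialgebra. -/
def IsLieCobracket (d : a →ₗ[k] a ⊗[k] a) : Prop :=
  (∀ x, IsAntisym k a (d x)) ∧ IsCocycle k a d ∧ IsCoJacobi k a d

/-- The classical twist equation `(d ⊗ id)(f) + [f^{13}, f^{23}] + cyclic permutations = 0`. -/
def IsTwist (d : a →ₗ[k] a ⊗[k] a) (f : a ⊗[k] a) : Prop :=
  cycSum k a ((d13 k a d) f + C13_23 k a (f ⊗ₜ f)) = 0

/-- The twisted cobracket `δ + ad(f)`. -/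
noncomputable def twistCobr (d : a →ₗ[k] a ⊗[k] a) (f : a ⊗[k] a) : a →ₗ[k] a ⊗[k] a :=
  d + adL k a f

/-- The classical Yang-Baxter equation for `r`. -/
def IsCYB (k : Type) [Field k] (a : Type) [LieRing a] [LieAlgebra k a] (r : a ⊗[k] a) : Prop :=
  C12_13 k a (r ⊗ₜ r) + C12_23 k a (r ⊗ₜ r) + C13_23 k a (r ⊗ₜ r) = 0

/-- `a`-invariance of `t = r + r^{21}`: `[t, x ⊗ 1 + 1 ⊗ x] = 0` for all `x`. -/
def IsAdInvariant (k : Type) [Field k] (a : Type) [LieRing a] [LieAlgebra k a] (t : a ⊗[k] a) : Prop :=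
  ∀ x : a, act k a x t = 0

/-! Put `s = (θ ⊗ θ) r`, so that `f = s - r`. As `θ` is a Lie automorphism, `s` again solves the
classical Yang–Baxter equation, and as `θ ⊗ θ` fixes `t`, `f` is antisymmetric. For antisymmetric
`f` the cyclic sum of `[f^{13}, f^{23}]` is `CYB(f)`, and the cyclic sum of
`(δ_r ⊗ id) f = [r^{12}, f^{13}] + [r^{12}, f^{23}]` is the cross term of `CYB(r + f)` up to
`[f^{12}, t^{13}] + [t^{13}, f^{23}]`, which vanishes by invariance of `t`. So the left side of
the twist equation is `CYB(s) - CYB(r) = 0`. -/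

noncomputable def cybMap : (a ⊗[k] a) ⊗[k] (a ⊗[k] a) →ₗ[k] a ⊗[k] (a ⊗[k] a) :=
  C12_13 k a + C12_23 k a + C13_23 k a

section

variable {k a}

@[simp] theorem act_apply_tmul (x u v : a) : act k a x (u ⊗ₜ v) = ⁅x, u⁆ ⊗ₜ v + u ⊗ₜ ⁅x, v⁆ := rfl

theorem adL_apply (f : a ⊗[k] a) (x : a) : adL k a f x = -act k a x f := rfl

@[simp] theorem d13_tmul (d : a →ₗ[k] a ⊗[k] a) (x y : a) :
    d13 k a d (x ⊗ₜ y) = TensorProduct.assoc k a a a (d x ⊗ₜ y) := rfl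

@[simp] theorem cyc_tmul (x y z : a) : cyc k a (x ⊗ₜ (y ⊗ₜ z)) = y ⊗ₜ (z ⊗ₜ x) := rfl

@[simp] theorem C12_13_tmul (x y u v : a) :
    C12_13 k a ((x ⊗ₜ y) ⊗ₜ (u ⊗ₜ v)) = ⁅x, u⁆ ⊗ₜ (y ⊗ₜ v) := rfl

@[simp] theorem C12_23_tmul (x y u v : a) :
    C12_23 k a ((x ⊗ₜ y) ⊗ₜ (u ⊗ₜ v)) = x ⊗ₜ (⁅y, u⁆ ⊗ₜ v) := rfl

@[simp] theorem C13_23_tmul (x y u v : a) :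
    C13_23 k a ((x ⊗ₜ y) ⊗ₜ (u ⊗ₜ v)) = x ⊗ₜ (u ⊗ₜ ⁅y, v⁆) := rfl

theorem cycSum_add (v w : a ⊗[k] (a ⊗[k] a)) : cycSum k a (v + w) = cycSum k a v + cycSum k a w := by
  simp only [cycSum, map_add]
  abel

theorem d13_adL_apply (r f : a ⊗[k] a) :
    d13 k a (adL k a r) f = C12_13 k a (r ⊗ₜ f) + C12_23 k a (r ⊗ₜ f) := by
  induction f using TensorProduct.induction_on with
  | zero => simp
  | add f₁ f₂ h₁ h₂ => simp only [map_add, tmul_add, h₁, h₂]; abel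
  | tmul u v =>
    rw [d13_tmul, adL_apply]
    induction r using TensorProduct.induction_on with
    | zero => simp
    | add r₁ r₂ h₁ h₂ => simp only [map_add, neg_add, add_tmul, h₁, h₂]; abel
    | tmul x y =>
      rw [act_apply_tmul, C12_13_tmul, C12_23_tmul, ← lie_skew u x, ← lie_skew u y]
      simp only [neg_add, add_tmul, neg_tmul, tmul_neg, map_add, map_neg, assoc_tmul]
      abel

theorem cyc_C12_13_tmul (x y : a ⊗[k] a) :
    cyc k a (C12_13 k a (x ⊗ₜ y)) =
      C13_23 k a (TensorProduct.comm k a a x ⊗ₜ TensorProduct.comm k a a y) := by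
  have h : cyc k a ∘ₗ C12_13 k a = C13_23 k a ∘ₗ
      map (TensorProduct.comm k a a).toLinearMap (TensorProduct.comm k a a).toLinearMap := by
    ext; simp
  simpa using LinearMap.congr_fun h (x ⊗ₜ y)

theorem cyc_C12_23_tmul (x y : a ⊗[k] a) :
    cyc k a (C12_23 k a (x ⊗ₜ y)) = -C12_13 k a (y ⊗ₜ TensorProduct.comm k a a x) := by
  have h : cyc k a ∘ₗ C12_23 k a = -(C12_13 k a ∘ₗ
      (TensorProduct.comm k (a ⊗[k] a) (a ⊗[k] a)).toLinearMap ∘ₗ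
        map (TensorProduct.comm k a a).toLinearMap LinearMap.id) := by
    ext x₁ x₂ y₁ y₂
    simp [← neg_tmul, lie_skew]
  simpa using LinearMap.congr_fun h (x ⊗ₜ y)

theorem cyc_C13_23_tmul (x y : a ⊗[k] a) :
    cyc k a (C13_23 k a (x ⊗ₜ y)) = -C12_23 k a (y ⊗ₜ TensorProduct.comm k a a x) := by
  have h : cyc k a ∘ₗ C13_23 k a = -(C12_23 k a ∘ₗ
      (TensorProduct.comm k (a ⊗[k] a) (a ⊗[k] a)).toLinearMap ∘ₗ
        map (TensorProduct.comm k a a).toLinearMap LinearMap.id) := by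
    ext x₁ x₂ y₁ y₂
    simp
    rw [← tmul_neg, ← neg_tmul, lie_skew]
  simpa using LinearMap.congr_fun h (x ⊗ₜ y)

theorem C12_13_tmul_of_isAdInvariant {t : a ⊗[k] a} (ht : IsAdInvariant k a t) (f : a ⊗[k] a) :
    C12_13 k a (f ⊗ₜ t) = C13_23 k a (t ⊗ₜ TensorProduct.comm k a a f) := by
  induction f using TensorProduct.induction_on with
  | zero => simp
  | add f₁ f₂ h₁ h₂ => simp only [add_tmul, tmul_add, map_add, h₁, h₂]
  | tmul u v =>
    have h : ∀ s : a ⊗[k] a, C12_13 k a ((u ⊗ₜ v) ⊗ₜ s) - C13_23 k a (s ⊗ₜ (v ⊗ₜ u)) =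
        map LinearMap.id (mk k a a v) (act k a u s) := by
      intro s
      induction s using TensorProduct.induction_on with
      | zero => simp
      | add s₁ s₂ h₁ h₂ => simp only [tmul_add, add_tmul, map_add, ← h₁, ← h₂]; abel
      | tmul x y =>
        simp only [C12_13_tmul, C13_23_tmul, act_apply_tmul, map_add, map_tmul, mk_apply,
          LinearMap.id_apply]
        rw [← lie_skew u y, tmul_neg, tmul_neg, sub_eq_add_neg]
    rw [comm_tmul, ← sub_eq_zero, h, ht u, map_zero]

theorem isCYB_iff_cybMap (r : a ⊗[k] a) : IsCYB k a r ↔ cybMap k a (r ⊗ₜ r) = 0 := Iff.rfl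

theorem cybMap_comp_map (g : a →ₗ⁅k⁆ a) :
    cybMap k a ∘ₗ map (map g.toLinearMap g.toLinearMap) (map g.toLinearMap g.toLinearMap) =
      map g.toLinearMap (map g.toLinearMap g.toLinearMap) ∘ₗ cybMap k a := by
  ext
  simp [cybMap]

theorem IsCYB.map {r : a ⊗[k] a} (hr : IsCYB k a r) (g : a →ₗ⁅k⁆ a) :
    IsCYB k a (map g.toLinearMap g.toLinearMap r) := by
  rw [isCYB_iff_cybMap] at hr ⊢
  simpa [hr] using LinearMap.congr_fun (cybMap_comp_map g) (r ⊗ₜ r)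

theorem isAntisym_map_sub_self (g : a →ₗ[k] a) {r : a ⊗[k] a}
    (h : map g g (r + TensorProduct.comm k a a r) = r + TensorProduct.comm k a a r) :
    IsAntisym k a (map g g r - r) := by
  rw [map_add, map_comm] at h
  rw [IsAntisym, map_sub, eq_sub_of_add_eq' h]
  abel

theorem cycSum_C13_23_self {f : a ⊗[k] a} (hf : IsAntisym k a f) :
    cycSum k a (C13_23 k a (f ⊗ₜ f)) = cybMap k a (f ⊗ₜ f) := by
  rw [IsAntisym] at hf
  simp only [cycSum, cyc_C13_23_tmul, map_neg, cyc_C12_23_tmul, hf, tmul_neg, neg_neg, cybMap,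
    LinearMap.add_apply]
  abel

theorem cycSum_d13_adL {f : a ⊗[k] a} (hf : IsAntisym k a f) (r : a ⊗[k] a) :
    cycSum k a (d13 k a (adL k a r) f) + C12_13 k a (f ⊗ₜ (r + TensorProduct.comm k a a r)) +
        C13_23 k a ((r + TensorProduct.comm k a a r) ⊗ₜ f) =
      cybMap k a (r ⊗ₜ f + f ⊗ₜ r) := by
  rw [IsAntisym] at hf
  simp only [d13_adL_apply, cycSum, map_add, cyc_C12_13_tmul, cyc_C12_23_tmul, cyc_C13_23_tmul,
    map_neg, hf, comm_comm, neg_tmul, tmul_neg, neg_neg, cybMap, LinearMap.add_apply, tmul_add,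
    add_tmul]
  abel

theorem C12_13_tmul_add_C13_23_tmul_eq_zero {t : a ⊗[k] a} (ht : IsAdInvariant k a t)
    {f : a ⊗[k] a} (hf : IsAntisym k a f) :
    C12_13 k a (f ⊗ₜ t) + C13_23 k a (t ⊗ₜ f) = 0 := by
  rw [C12_13_tmul_of_isAdInvariant ht, hf, tmul_neg, map_neg, neg_add_cancel]

theorem cycSum_twist_eq {r f : a ⊗[k] a} (ht : IsAdInvariant k a (r + TensorProduct.comm k a a r))
    (hf : IsAntisym k a f) :
    cycSum k a (d13 k a (adL k a r) f + C13_23 k a (f ⊗ₜ f)) =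
      cybMap k a ((r + f) ⊗ₜ (r + f)) - cybMap k a (r ⊗ₜ r) := by
  have h := cycSum_d13_adL hf r
  rw [add_assoc, C12_13_tmul_add_C13_23_tmul_eq_zero ht hf, add_zero] at h
  rw [cycSum_add, h, cycSum_C13_23_self hf]
  simp only [add_tmul, tmul_add, map_add]
  abel

theorem isTwist_adL_of_isCYB {r f : a ⊗[k] a} (hr : IsCYB k a r) (hrf : IsCYB k a (r + f))
    (ht : IsAdInvariant k a (r + TensorProduct.comm k a a r)) (hf : IsAntisym k a f) :
    IsTwist k a (adL k a r) f := by
  rw [isCYB_iff_cybMap] at hr hrf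
  rw [IsTwist, cycSum_twist_eq ht hf, hr, hrf, sub_zero]

end

theorem qt_twist_is_classical_twist_general
    (k : Type) [Field k] (a : Type) [LieRing a] [LieAlgebra k a]
    (r : a ⊗[k] a) (hr : IsCYB k a r)
    (ht : IsAdInvariant k a (r + TensorProduct.comm k a a r))
    (θ : a ≃ₗ⁅k⁆ a)
    (hθt : TensorProduct.map θ.toLieHom.toLinearMap θ.toLieHom.toLinearMap
        (r + TensorProduct.comm k a a r) = r + TensorProduct.comm k a a r) :
    IsTwist k a (adL k a r)
      (TensorProduct.map θ.toLieHom.toLinearMap θ.toLieHom.toLinearMap r - r) := by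
  refine isTwist_adL_of_isCYB hr ?_ ht (isAntisym_map_sub_self _ hθt)
  rw [add_sub_cancel]
  exact hr.map θ.toLieHom

/-- `f = (θ⊗θ)(r) − r` is a classical twist of the quasitriangular
Lie bialgebra `(a, δ_r)` where `δ_r(x) = [r, x⊗1+1⊗x]`. -/
theorem qt_twist_is_classical_twist
    (k : Type) [Field k] [CharZero k] (a : Type) [LieRing a] [LieAlgebra k a]
    (r : a ⊗[k] a) (hr : IsCYB k a r)
    (ht : IsAdInvariant k a (r + TensorProduct.comm k a a r))
    (θ : a ≃ₗ⁅k⁆ a)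
    (hθt : TensorProduct.map θ.toLieHom.toLinearMap θ.toLieHom.toLinearMap
        (r + TensorProduct.comm k a a r) = r + TensorProduct.comm k a a r) :
    IsTwist k a (adL k a r)
      (TensorProduct.map θ.toLieHom.toLinearMap θ.toLieHom.toLinearMap r - r) :=
  qt_twist_is_classical_twist_general k a r hr ht θ hθt
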